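/- Let α ∈ (0,1] and p ≥ 0 real. For x > 0 define (J_α)_p(x) = Σ_{n=0}^∞ ((−1)^n/(n!·Γ(p+n+1)))·(x^α/2)^{2n+p}. Then (J_α)_p satisfies the conformable fractional Bessel equation x^{2α}·T_α(T_α y)(x) + α·x^α·(T_α y)(x) + α²·(x^{2α} − p²)·y(x) = 0. -/

import Mathlib

/-!
With `z = x ^ α` the chain rule gives `T_α (G ∘ (· ^ α)) x = α G'(x ^ α)`, so `(J_α)_p x = J_p (x ^ α)`
for the classical Bessel function `J_p`, and the conformable equation is `α²` times Bessel's
equation `z² J'' + z J' + (z² - p²) J = 0` at `z = x ^ α`. The latter is checked on the series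
`J_p z = ∑ aₙ (z/2)^(2n+p)`: it can be differentiated termwise since `aₙ = O(1/n!)`, the operator
`z² f'' + z f'` multiplies `aₙ` by `(2n+p)²`, and `z² J_p` is the series shifted by one index, which the
recursion `n (n+p) aₙ = -aₙ₋₁` cancels against the term `-p² J_p`.
-/

open Real

noncomputable def confDeriv (α : ℝ) (f : ℝ → ℝ) (x : ℝ) : ℝ :=
  x ^ (1 - α) * deriv f x

noncomputable def confBesselJ (α p : ℝ) (x : ℝ) : ℝ :=
  ∑' n : ℕ, ((-1 : ℝ) ^ n / ((n.factorial : ℝ) * Real.Gamma (p + n + 1)))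
    * (x ^ α / 2) ^ (2 * (n : ℝ) + p)

open Topology
open scoped Nat

lemma rpow_two_mul_natCast_add {u : ℝ} (hu : 0 < u) (n : ℕ) (s : ℝ) :
    u ^ (2 * (n : ℝ) + s) = u ^ s * (u ^ 2) ^ n := by
  rw [rpow_add hu, mul_comm, ← pow_mul, ← rpow_natCast]
  push_cast
  ring_nf

lemma rpow_le_rpow_add_rpow {a b y : ℝ} (ha : 0 < a) (hay : a ≤ y) (hyb : y ≤ b) (e : ℝ) :
    y ^ e ≤ a ^ e + b ^ e := by
  rcases le_total 0 e with he | he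
  · exact (rpow_le_rpow (ha.le.trans hay) hyb he).trans
      (le_add_of_nonneg_left (rpow_nonneg ha.le e))
  · exact (rpow_le_rpow_of_nonpos ha hay he).trans
      (le_add_of_nonneg_right (rpow_nonneg (ha.le.trans (hay.trans hyb)) e))

lemma summable_natCast_add_mul_mul_pow {c : ℕ → ℝ} (hc : ∀ r, Summable fun n => c n * r ^ n)
    (b r : ℝ) : Summable fun n => (n + b) * c n * r ^ n := by
  refine .of_norm_bounded ((hc (2 * r)).abs.mul_left (1 + |b|)) fun n => ?_
  have hn : (n : ℝ) ≤ 2 ^ n := by exact_mod_cast n.lt_two_pow_self.le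
  have h1 : (1 : ℝ) ≤ 2 ^ n := one_le_pow₀ one_le_two
  have hlin : |n + b| ≤ (1 + |b|) * 2 ^ n := by
    calc |n + b| ≤ n + |b| := by simpa using abs_add_le (n : ℝ) b
      _ ≤ (1 + |b|) * 2 ^ n := by nlinarith [abs_nonneg b]
  rw [Real.norm_eq_abs, abs_mul, abs_mul, abs_mul, mul_pow, abs_mul, abs_pow, abs_pow, abs_two]
  calc |n + b| * |c n| * |r| ^ n ≤ (1 + |b|) * 2 ^ n * |c n| * |r| ^ n := by gcongr
    _ = (1 + |b|) * (|c n| * (2 ^ n * |r| ^ n)) := by ring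

noncomputable def besselSeries (c : ℕ → ℝ) (s z : ℝ) : ℝ :=
  ∑' n : ℕ, c n * (z / 2) ^ (2 * (n : ℝ) + s)

section BesselSeries

variable {c : ℕ → ℝ}

lemma summable_besselSeries (hc : ∀ r, Summable fun n => c n * r ^ n) (s : ℝ) {z : ℝ}
    (hz : 0 < z) : Summable fun n : ℕ => c n * (z / 2) ^ (2 * (n : ℝ) + s) :=
  ((hc ((z / 2) ^ 2)).mul_left ((z / 2) ^ s)).congr fun n => by
    rw [rpow_two_mul_natCast_add (by positivity)]; ring

lemma hasDerivAt_besselSeries (hc : ∀ r, Summable fun n => c n * r ^ n) (s : ℝ) {z : ℝ}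
    (hz : 0 < z) :
    HasDerivAt (besselSeries c s) (besselSeries (fun n => (n + s / 2) * c n) (s - 1) z) z := by
  have hterm : ∀ (n : ℕ) y, y ∈ Set.Ioo (z / 2) (2 * z) →
      HasDerivAt (fun y => c n * (y / 2) ^ (2 * (n : ℝ) + s))
        ((n + s / 2) * c n * (y / 2) ^ (2 * (n : ℝ) + (s - 1))) y := by
    intro n y hy
    have hy0 : y / 2 ≠ 0 := by linarith [hy.1]
    refine ((((hasDerivAt_id y).div_const 2).rpow_const (p := 2 * (n : ℝ) + s)
      (Or.inl hy0)).const_mul (c n)).congr_deriv ?_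
    rw [id, show 2 * (n : ℝ) + s - 1 = 2 * n + (s - 1) by ring]
    ring
  -- on `(z/2, 2z)` we have `z/4 < y/2 < z`, which bounds the differentiated terms uniformly
  have hbound : ∀ (n : ℕ) y, y ∈ Set.Ioo (z / 2) (2 * z) →
      ‖(n + s / 2) * c n * (y / 2) ^ (2 * (n : ℝ) + (s - 1))‖
        ≤ ((z / 4) ^ (s - 1) + z ^ (s - 1)) * |(n + s / 2) * c n * (z ^ 2) ^ n| := by
    intro n y ⟨hy₁, hy₂⟩
    have hy : 0 < y / 2 := by linarith
    have hpow : (y / 2) ^ 2 ≤ z ^ 2 := pow_le_pow_left₀ hy.le (by linarith) 2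
    have hrpow := rpow_le_rpow_add_rpow (by positivity : 0 < z / 4) (by linarith : z / 4 ≤ y / 2)
      (by linarith : y / 2 ≤ z) (s - 1)
    calc ‖(n + s / 2) * c n * (y / 2) ^ (2 * (n : ℝ) + (s - 1))‖
        = |(n + s / 2) * c n| * ((y / 2) ^ (s - 1) * ((y / 2) ^ 2) ^ n) := by
          rw [rpow_two_mul_natCast_add hy, norm_mul, Real.norm_eq_abs, Real.norm_eq_abs,
            abs_of_pos (mul_pos (rpow_pos_of_pos hy _) (pow_pos (pow_pos hy 2) n))]
      _ ≤ |(n + s / 2) * c n| * (((z / 4) ^ (s - 1) + z ^ (s - 1)) * (z ^ 2) ^ n) := by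
          gcongr
      _ = _ := by rw [abs_mul _ ((z ^ 2) ^ n), abs_of_nonneg (pow_nonneg (sq_nonneg z) n)]; ring
  exact hasDerivAt_tsum_of_isPreconnected
    ((summable_natCast_add_mul_mul_pow hc (s / 2) (z ^ 2)).abs.mul_left _) isOpen_Ioo
    isPreconnected_Ioo hterm hbound (by constructor <;> linarith) (summable_besselSeries hc s hz)
    (by constructor <;> linarith)

lemma hasDerivAt_deriv_besselSeries (hc : ∀ r, Summable fun n => c n * r ^ n) (s : ℝ) {z : ℝ}
    (hz : 0 < z) :
    HasDerivAt (deriv (besselSeries c s))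
      (besselSeries (fun n => (n + (s - 1) / 2) * ((n + s / 2) * c n)) (s - 1 - 1) z) z := by
  have hderiv : deriv (besselSeries c s) =ᶠ[𝓝 z]
      besselSeries (fun n => (n + s / 2) * c n) (s - 1) := by
    filter_upwards [Ioi_mem_nhds hz] with y hy using (hasDerivAt_besselSeries hc s hy).deriv
  exact (hasDerivAt_besselSeries (fun r => summable_natCast_add_mul_mul_pow hc (s / 2) r)
    (s - 1) hz).congr_of_eventuallyEq hderiv

lemma mul_besselSeries (c : ℕ → ℝ) (s : ℝ) {z : ℝ} (hz : 0 < z) :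
    z * besselSeries c s z = 2 * besselSeries c (s + 1) z := by
  simp only [besselSeries, ← tsum_mul_left]
  refine tsum_congr fun n => ?_
  rw [show 2 * (n : ℝ) + (s + 1) = 2 * n + s + 1 by ring, rpow_add_one (by positivity)]
  ring

lemma besselSeries_bessel_operator (hc : ∀ r, Summable fun n => c n * r ^ n) (s p : ℝ) {z : ℝ}
    (hz : 0 < z) :
    z ^ 2 * deriv (deriv (besselSeries c s)) z + z * deriv (besselSeries c s) z
        + (z ^ 2 - p ^ 2) * besselSeries c s z
      = besselSeries (fun n => ((2 * n + s) ^ 2 - p ^ 2) * c n) s z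
        + 4 * besselSeries c (s + 2) z := by
  have hc₁ := summable_natCast_add_mul_mul_pow hc (s / 2)
  have hc₂ := summable_natCast_add_mul_mul_pow hc₁ ((s - 1) / 2)
  rw [(hasDerivAt_deriv_besselSeries hc s hz).deriv, (hasDerivAt_besselSeries hc s hz).deriv]
  have h₂ : z ^ 2 * besselSeries (fun n => (n + (s - 1) / 2) * ((n + s / 2) * c n)) (s - 1 - 1) z
      = 4 * besselSeries (fun n => (n + (s - 1) / 2) * ((n + s / 2) * c n)) s z := by
    rw [sq, mul_assoc, mul_besselSeries _ _ hz, mul_left_comm, mul_besselSeries _ _ hz,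
      show s - 1 - 1 + 1 + 1 = s by ring]
    ring
  have h₁ : z * besselSeries (fun n => (n + s / 2) * c n) (s - 1) z
      = 2 * besselSeries (fun n => (n + s / 2) * c n) s z := by
    rw [mul_besselSeries _ _ hz, sub_add_cancel]
  have h₀ : z ^ 2 * besselSeries c s z = 4 * besselSeries c (s + 2) z := by
    rw [sq, mul_assoc, mul_besselSeries _ _ hz, mul_left_comm, mul_besselSeries _ _ hz,
      add_assoc, one_add_one_eq_two]
    ring
  have hcoeff : besselSeries (fun n => ((2 * n + s) ^ 2 - p ^ 2) * c n) s z
      = 4 * besselSeries (fun n => (n + (s - 1) / 2) * ((n + s / 2) * c n)) s z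
        + 2 * besselSeries (fun n => (n + s / 2) * c n) s z - p ^ 2 * besselSeries c s z := by
    simp only [besselSeries, ← tsum_mul_left]
    rw [← ((summable_besselSeries hc₂ s hz).mul_left 4).tsum_add
        ((summable_besselSeries hc₁ s hz).mul_left 2),
      ← (((summable_besselSeries hc₂ s hz).mul_left 4).add
        ((summable_besselSeries hc₁ s hz).mul_left 2)).tsum_sub
        ((summable_besselSeries hc s hz).mul_left (p ^ 2))]
    exact tsum_congr fun n => by ring
  rw [h₂, h₁, sub_mul, h₀, hcoeff]
  ring

end BesselSeries

noncomputable def besselCoeff (p : ℝ) (n : ℕ) : ℝ :=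
  (-1) ^ n / (n ! * Gamma (p + n + 1))

noncomputable def besselJ (p : ℝ) : ℝ → ℝ :=
  besselSeries (besselCoeff p) p

lemma Gamma_add_one_le_Gamma_add_natCast_add_one {p : ℝ} (hp : 0 ≤ p) (n : ℕ) :
    Gamma (p + 1) ≤ Gamma (p + n + 1) := by
  induction n with
  | zero => simp
  | succ n ih =>
    have hpos : 0 < p + n + 1 := by positivity
    rw [Nat.cast_succ, ← add_assoc, Gamma_add_one hpos.ne']
    nlinarith [Gamma_pos_of_pos hpos]

lemma summable_besselCoeff_mul_pow {p : ℝ} (hp : 0 ≤ p) (r : ℝ) :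
    Summable fun n => besselCoeff p n * r ^ n := by
  have hΓ : 0 < Gamma (p + 1) := Gamma_pos_of_pos (by linarith)
  refine .of_norm_bounded ((summable_pow_div_factorial |r|).mul_left (Gamma (p + 1))⁻¹)
    fun n => ?_
  have hΓn : Gamma (p + 1) ≤ Gamma (p + n + 1) := Gamma_add_one_le_Gamma_add_natCast_add_one hp n
  calc ‖besselCoeff p n * r ^ n‖ = |r| ^ n / (n ! * Gamma (p + n + 1)) := by
        rw [besselCoeff, norm_mul, norm_div, norm_pow, norm_pow, norm_neg, norm_one, one_pow,
          Real.norm_eq_abs, Real.norm_eq_abs, abs_of_pos (by positivity)]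
        ring
    _ ≤ |r| ^ n / (n ! * Gamma (p + 1)) := by gcongr
    _ = (Gamma (p + 1))⁻¹ * (|r| ^ n / n !) := by ring

lemma besselCoeff_succ (p : ℝ) {n : ℕ} (h : p + n + 1 ≠ 0) :
    (n + 1) * (n + 1 + p) * besselCoeff p (n + 1) = -besselCoeff p n := by
  rw [besselCoeff, besselCoeff, Nat.factorial_succ, Nat.cast_succ, ← add_assoc, Gamma_add_one h]
  push_cast
  field_simp
  ring

lemma besselSeries_sq_sub_sq_mul_besselCoeff {p : ℝ} (hp : 0 ≤ p) {z : ℝ} (hz : 0 < z) :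
    besselSeries (fun n => ((2 * n + p) ^ 2 - p ^ 2) * besselCoeff p n) p z
      = -4 * besselSeries (besselCoeff p) (p + 2) z := by
  have hshift : ∀ n : ℕ,
      ((2 * ((n + 1 : ℕ) : ℝ) + p) ^ 2 - p ^ 2) * besselCoeff p (n + 1)
          * (z / 2) ^ (2 * ((n + 1 : ℕ) : ℝ) + p)
        = -4 * (besselCoeff p n * (z / 2) ^ (2 * (n : ℝ) + (p + 2))) := by
    intro n
    have hrec := besselCoeff_succ p (n := n) (by positivity)
    rw [show 2 * ((n + 1 : ℕ) : ℝ) + p = 2 * n + (p + 2) by push_cast; ring]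
    linear_combination 4 * (z / 2) ^ (2 * (n : ℝ) + (p + 2)) * hrec
  have hsum := ((summable_besselSeries (summable_besselCoeff_mul_pow hp) (p + 2) hz).mul_left
    (-4)).congr fun n => (hshift n).symm
  rw [besselSeries, tsum_eq_zero_add' (f := fun n : ℕ => ((2 * (n : ℝ) + p) ^ 2 - p ^ 2)
    * besselCoeff p n * (z / 2) ^ (2 * (n : ℝ) + p)) hsum, tsum_congr hshift, tsum_mul_left]
  simp [besselSeries]

lemma confBesselJ_eq_besselJ_comp_rpow (α p : ℝ) :
    confBesselJ α p = fun x => besselJ p (x ^ α) :=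
  rfl

theorem besselJ_bessel_equation {p : ℝ} (hp : 0 ≤ p) {z : ℝ} (hz : 0 < z) :
    z ^ 2 * deriv (deriv (besselJ p)) z + z * deriv (besselJ p) z
      + (z ^ 2 - p ^ 2) * besselJ p z = 0 := by
  rw [besselJ, besselSeries_bessel_operator (summable_besselCoeff_mul_pow hp) p p hz,
    besselSeries_sq_sub_sq_mul_besselCoeff hp hz]
  ring

lemma confDeriv_comp_rpow {G : ℝ → ℝ} {α x : ℝ} (hx : 0 < x)
    (hG : DifferentiableAt ℝ G (x ^ α)) :
    confDeriv α (fun y => G (y ^ α)) x = α * deriv G (x ^ α) := by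
  have hchain : HasDerivAt (fun y => G (y ^ α)) (deriv G (x ^ α) * (α * x ^ (α - 1))) x :=
    hG.hasDerivAt.comp x (hasDerivAt_rpow_const (Or.inl hx.ne'))
  rw [confDeriv, hchain.deriv]
  have hcancel : x ^ (1 - α) * x ^ (α - 1) = 1 := by
    rw [← rpow_add hx, sub_add_sub_cancel', sub_self, rpow_zero]
  linear_combination α * deriv G (x ^ α) * hcancel

lemma confDeriv_confDeriv_comp_rpow {G : ℝ → ℝ} {α x : ℝ} (hx : 0 < x)
    (hG : ∀ z, 0 < z → DifferentiableAt ℝ G z) (hG' : DifferentiableAt ℝ (deriv G) (x ^ α)) :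
    confDeriv α (confDeriv α (fun y => G (y ^ α))) x = α ^ 2 * deriv (deriv G) (x ^ α) := by
  have hfirst : confDeriv α (fun y => G (y ^ α)) =ᶠ[𝓝 x] fun y => α * deriv G (y ^ α) := by
    filter_upwards [Ioi_mem_nhds hx] with y hy
    exact confDeriv_comp_rpow hy (hG _ (rpow_pos_of_pos hy α))
  rw [confDeriv, hfirst.deriv_eq, ← confDeriv, confDeriv_comp_rpow hx (hG'.const_mul α),
    deriv_const_mul _ hG']
  ring

theorem conformable_bessel_order_p_general (α : ℝ)
    (p : ℝ) (hp : 0 ≤ p) (x : ℝ) (hx : 0 < x) :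
    x ^ (2 * α) * confDeriv α (confDeriv α (confBesselJ α p)) x
      + α * x ^ α * confDeriv α (confBesselJ α p) x
      + α ^ 2 * (x ^ (2 * α) - p ^ 2) * confBesselJ α p x = 0 := by
  have hz : 0 < x ^ α := rpow_pos_of_pos hx α
  have hJ : ∀ z, 0 < z → DifferentiableAt ℝ (besselJ p) z := fun z hz =>
    (hasDerivAt_besselSeries (summable_besselCoeff_mul_pow hp) p hz).differentiableAt
  have hJ' : DifferentiableAt ℝ (deriv (besselJ p)) (x ^ α) :=
    (hasDerivAt_deriv_besselSeries (summable_besselCoeff_mul_pow hp) p hz).differentiableAt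
  have hsq : x ^ (2 * α) = (x ^ α) ^ 2 := by rw [mul_comm, rpow_mul hx.le]; norm_cast
  rw [confBesselJ_eq_besselJ_comp_rpow, confDeriv_confDeriv_comp_rpow hx hJ hJ',
    confDeriv_comp_rpow hx (hJ _ hz), hsq]
  linear_combination α ^ 2 * besselJ_bessel_equation hp hz

theorem conformable_bessel_order_p (α : ℝ) (hα : α ∈ Set.Ioc (0:ℝ) 1)
    (p : ℝ) (hp : 0 ≤ p) (x : ℝ) (hx : 0 < x) :
    x ^ (2 * α) * confDeriv α (confDeriv α (confBesselJ α p)) x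
      + α * x ^ α * confDeriv α (confBesselJ α p) x
      + α ^ 2 * (x ^ (2 * α) - p ^ 2) * confBesselJ α p x = 0 :=
  conformable_bessel_order_p_general α p hp x hx
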